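/- Let 𝒜 be a finite list in a finitely generated abelian group Γ, and let G be a torsion-wise finite abelian group. Suppose 𝒜 ⊂ Γ_tor. Then T_𝒜^G(x,y) = Σ_{k=0}^{#𝒜} ( Σ_{𝒮⊂𝒜, #𝒮=k} #M(𝒜/𝒮; Γ_tor/⟨𝒮⟩, G) ) y^k. In particular T_𝒜^G is a polynomial in y alone with nonnegative integer coefficients. -/

import Mathlib

def TorsionwiseFinite (G : Type*) [AddCommGroup G] : Prop :=
  ∀ d : ℕ, 0 < d → Finite {x : G // d • x = 0}

noncomputable def rk (Γ : Type*) [AddCommGroup Γ] (X : Set Γ) : ℕ :=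
  Module.finrank ℤ (AddSubgroup.closure X)

noncomputable def mult (Γ : Type*) [AddCommGroup Γ] (G : Type*) [AddCommGroup G]
    (X : Set Γ) : ℕ :=
  Nat.card ((AddCommGroup.torsion (Γ ⧸ AddSubgroup.closure X)) →+ G)

noncomputable def Tpoly {ι Γ : Type*} [AddCommGroup Γ] (G : Type*) [AddCommGroup G]
    (A : Finset ι) (a : ι → Γ) (x y : ℤ) : ℤ :=
  ∑ S ∈ A.powerset, (mult Γ G (a '' (S : Set ι)) : ℤ) *
    (x - 1) ^ (rk Γ (a '' (A : Set ι)) - rk Γ (a '' (S : Set ι))) *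
    (y - 1) ^ (S.card - rk Γ (a '' (S : Set ι)))

/-
Every sublist `𝒮` consists of torsion elements, so all ranks vanish and, because `⟨𝒮⟩` is
torsion, `(Γ ⧸ ⟨𝒮⟩)_tor = Γ_tor ⧸ ⟨𝒮⟩`; hence `T_𝒜^G(x,y) = Σ_𝒮 N(𝒮) (y-1)^{#𝒮}`, where `N(𝒮)`
counts the homomorphisms `Γ_tor → G` vanishing on `𝒮`. Sorting these homomorphisms by their
zero set `Z(φ) ⊆ 𝒜` and using `Σ_{𝒮 ⊆ Z} (y-1)^{#𝒮} = y^{#Z}`, both sides become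
`Σ_φ y^{#Z(φ)}`, a finite sum because `Γ_tor` is finite and `G` has finite `d`-torsion.
-/

open AddCommGroup

theorem finite_torsion_of_fg (Γ : Type*) [AddCommGroup Γ] [AddGroup.FG Γ] :
    Finite (torsion Γ) := by
  have : Module.Finite ℤ Γ := Module.Finite.iff_addGroup_fg.mpr ‹_›
  have : AddGroup.FG (torsion Γ) := Module.Finite.iff_addGroup_fg.mp
    (inferInstance : Module.Finite ℤ (AddSubgroup.toIntSubmodule (torsion Γ)))
  exact finite_of_fg_isAddTorsion _ fun t => AddSubmonoid.isOfFinAddOrder_coe.mp t.2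

theorem finite_addMonoidHom_of_torsionwiseFinite (M : Type*) [AddCommGroup M] [Finite M]
    {G : Type*} [AddCommGroup G] (hG : TorsionwiseFinite G) : Finite (M →+ G) := by
  have := hG (Nat.card M) Nat.card_pos
  -- `φ` takes values in the `#M`-torsion of `G`, which is finite
  refine Finite.of_injective
    (fun φ : M →+ G => fun m => (⟨φ m, by rw [← map_nsmul, card_nsmul_eq_zero', map_zero]⟩ :
      {x : G // Nat.card M • x = 0})) fun φ ψ h => ?_
  ext m
  exact congrArg Subtype.val (congrFun h m)

section TorsionQuotient

variable {Γ : Type*} [AddCommGroup Γ]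

theorem rk_eq_zero_of_subset_torsion {X : Set Γ} (hX : X ⊆ torsion Γ) : rk Γ X = 0 := by
  have hle : AddSubgroup.closure X ≤ torsion Γ := (AddSubgroup.closure_le _).mpr hX
  have hrank : Module.rank ℤ (AddSubgroup.closure X) = 0 := by
    rw [rank_eq_zero_iff]
    intro x
    obtain ⟨n, hn, hx⟩ := isOfFinAddOrder_iff_nsmul_eq_zero.mp (hle x.2)
    exact ⟨n, by exact_mod_cast hn.ne', Subtype.ext (by simpa using hx)⟩
  simp [rk, Module.finrank, hrank]

def torsionMk (H : AddSubgroup Γ) : torsion Γ →+ torsion (Γ ⧸ H) :=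
  ((QuotientAddGroup.mk' H).comp (torsion Γ).subtype).codRestrict _ fun t =>
    le_comap_torsion (QuotientAddGroup.mk' H) t.2

theorem ker_torsionMk (H : AddSubgroup Γ) : (torsionMk H).ker = H.comap (torsion Γ).subtype := by
  ext t
  rw [AddMonoidHom.mem_ker, AddSubgroup.mem_comap, ← QuotientAddGroup.eq_zero_iff]
  exact Subtype.ext_iff

theorem torsionMk_surjective {H : AddSubgroup Γ} (hH : H ≤ torsion Γ) :
    Function.Surjective (torsionMk H) := by
  rintro ⟨q, hq⟩
  obtain ⟨z, rfl⟩ := QuotientAddGroup.mk_surjective q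
  obtain ⟨m, hm, hmz⟩ := isOfFinAddOrder_iff_nsmul_eq_zero.mp hq
  have hmzH : m • z ∈ H := by
    rwa [← QuotientAddGroup.eq_zero_iff, QuotientAddGroup.mk_nsmul]
  obtain ⟨k, hk, hkmz⟩ := isOfFinAddOrder_iff_nsmul_eq_zero.mp (hH hmzH)
  refine ⟨⟨z, isOfFinAddOrder_iff_nsmul_eq_zero.mpr ⟨k * m, Nat.mul_pos hk hm, ?_⟩⟩, rfl⟩
  rwa [mul_smul]

theorem mult_image_val_eq_card (G : Type*) [AddCommGroup G] (X : Set (torsion Γ)) :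
    mult Γ G (Subtype.val '' X) = Nat.card {φ : torsion Γ →+ G // ∀ x ∈ X, φ x = 0} := by
  set H := AddSubgroup.closure (Subtype.val '' X)
  have hH : H = (AddSubgroup.closure X).map (torsion Γ).subtype := by
    rw [AddMonoidHom.map_closure]; rfl
  have hker : (torsionMk H).ker = AddSubgroup.closure X := by
    rw [ker_torsionMk, hH,
      AddSubgroup.comap_map_eq_self_of_injective (torsion Γ).subtype_injective]
  rw [mult, ← Nat.card_congr ((torsionMk H).liftOfSurjective (torsionMk_surjective ?_))]
  · refine Nat.card_congr (Equiv.subtypeEquivRight fun φ => ?_)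
    rw [hker, AddSubgroup.closure_le]
    rfl
  · rw [hH]; exact AddSubgroup.map_le_iff_le_comap.mpr fun t _ => t.2

end TorsionQuotient

section CountingByZeroSet

open Finset

variable {X ι R : Type*} [Fintype X] [DecidableEq ι] [CommSemiring R]
  (P : X → ι → Prop) [∀ x, DecidablePred (P x)] (A : Finset ι)

theorem sum_powerset_natCard_forall_mul_pow (z : R) :
    ∑ S ∈ A.powerset, (Nat.card {x // ∀ i ∈ S, P x i} : R) * z ^ S.card =
      ∑ x, (z + 1) ^ (A.filter (P x)).card := by
  have hforall : ∀ S ∈ A.powerset, ∀ x, (∀ i ∈ S, P x i) ↔ S ⊆ A.filter (P x) := by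
    intro S hS x
    simp only [subset_iff, mem_filter]
    exact ⟨fun h i hi => ⟨mem_powerset.mp hS hi, h i hi⟩, fun h i hi => (h hi).2⟩
  calc ∑ S ∈ A.powerset, (Nat.card {x // ∀ i ∈ S, P x i} : R) * z ^ S.card
      = ∑ S ∈ A.powerset, ∑ x, if S ⊆ A.filter (P x) then z ^ S.card else 0 := by
        refine sum_congr rfl fun S hS => ?_
        rw [Nat.card_eq_fintype_card, Fintype.card_subtype, natCast_card_filter, sum_mul]
        refine sum_congr rfl fun x _ => ?_
        rw [ite_mul, one_mul, zero_mul, if_congr (hforall S hS x) rfl rfl]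
    _ = ∑ x, ∑ S ∈ (A.filter (P x)).powerset, z ^ S.card := by
        rw [sum_comm]
        refine sum_congr rfl fun x _ => ?_
        rw [← sum_filter]
        congr 1
        ext S
        simp only [mem_filter, mem_powerset, and_iff_right_iff_imp]
        exact fun h => h.trans (filter_subset _ _)
    _ = ∑ x, (z + 1) ^ (A.filter (P x)).card := by
        refine sum_congr rfl fun x _ => ?_
        simpa using sum_pow_mul_eq_add_pow z 1 (A.filter (P x))

theorem sum_range_sum_natCard_mul_pow (y : R) :
    ∑ k ∈ range (A.card + 1), (∑ S ∈ A.powerset.filter (fun S => S.card = k),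
        (Nat.card {x // (∀ i ∈ S, P x i) ∧ ∀ i ∈ A \ S, ¬ P x i} : R)) * y ^ k =
      ∑ x, y ^ (A.filter (P x)).card := by
  have hexact : ∀ S ∈ A.powerset, ∀ x,
      ((∀ i ∈ S, P x i) ∧ ∀ i ∈ A \ S, ¬ P x i) ↔ A.filter (P x) = S := by
    intro S hS x
    rw [Finset.ext_iff]
    simp only [mem_filter, mem_sdiff]
    have hSA := mem_powerset.mp hS
    constructor
    · rintro ⟨hSP, hAP⟩ i
      exact ⟨fun h => by_contra fun hi => hAP i ⟨h.1, hi⟩ h.2, fun hi => ⟨hSA hi, hSP i hi⟩⟩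
    · intro h
      exact ⟨fun i hi => ((h i).mpr hi).2, fun i hi hP => hi.2 ((h i).mp ⟨hi.1, hP⟩)⟩
  calc _ = ∑ S ∈ A.powerset,
        (Nat.card {x // (∀ i ∈ S, P x i) ∧ ∀ i ∈ A \ S, ¬ P x i} : R) * y ^ S.card := by
        rw [sum_powerset]
        refine sum_congr rfl fun k _ => ?_
        rw [powersetCard_eq_filter, sum_mul]
        exact sum_congr rfl fun S hS => by rw [(mem_filter.mp hS).2]
    _ = ∑ S ∈ A.powerset, ∑ x with A.filter (P x) = S, y ^ (A.filter (P x)).card := by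
        refine sum_congr rfl fun S hS => ?_
        rw [sum_congr rfl fun x hx => by rw [(mem_filter.mp hx).2], sum_const, nsmul_eq_mul,
          Nat.card_eq_fintype_card, Fintype.card_subtype, filter_congr fun x _ => hexact S hS x]
    _ = ∑ x, y ^ (A.filter (P x)).card :=
        sum_fiberwise_of_maps_to (fun x _ => mem_powerset.mpr (filter_subset _ _)) _

end CountingByZeroSet

theorem Tpoly_coe_torsion_eq {ι Γ : Type*} [AddCommGroup Γ] (G : Type*) [AddCommGroup G]
    (A : Finset ι) (a : ι → torsion Γ) (x y : ℤ) :
    Tpoly G A (fun i => (a i : Γ)) x y = ∑ S ∈ A.powerset,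
      (Nat.card {φ : torsion Γ →+ G // ∀ i ∈ S, φ (a i) = 0} : ℤ) * (y - 1) ^ S.card := by
  have himage : ∀ T : Finset ι, (fun i => (a i : Γ)) '' T = Subtype.val '' (a '' T) :=
    fun T => Set.image_comp _ _ _
  have hrk : ∀ T : Finset ι, rk Γ ((fun i => (a i : Γ)) '' T) = 0 := fun T =>
    rk_eq_zero_of_subset_torsion (himage T ▸ Subtype.coe_image_subset _ _)
  refine Finset.sum_congr rfl fun S _ => ?_
  rw [hrk, hrk, himage, mult_image_val_eq_card, pow_zero, mul_one, Nat.sub_zero]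
  simp only [Set.forall_mem_image, Finset.mem_coe]

/-- If the list `𝒜` is contained in the torsion subgroup `Γ_tor`, then
`T_𝒜^G(x,y) = Σ_k (Σ_{#𝒮 = k} #M(𝒜/𝒮; Γ_tor/⟨𝒮⟩, G)) y^k`; in particular it is a
polynomial in `y` alone with nonnegative integer coefficients. -/
theorem tutte_of_torsion_list {ι Γ : Type*} [DecidableEq ι] [AddCommGroup Γ] [AddGroup.FG Γ]
    (G : Type*) [AddCommGroup G] (hG : TorsionwiseFinite G)
    (A : Finset ι) (a : ι → AddCommGroup.torsion Γ) :
    ∀ x y : ℤ, Tpoly G A (fun i => ((a i : AddCommGroup.torsion Γ) : Γ)) x y =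
      ∑ k ∈ Finset.range (A.card + 1),
        (∑ S ∈ A.powerset.filter (fun S => S.card = k),
          (Nat.card {φ : (AddCommGroup.torsion Γ) →+ G //
            (∀ i ∈ S, φ (a i) = 0) ∧ (∀ i ∈ A \ S, φ (a i) ≠ 0)} : ℤ)) * y ^ k := by
  classical
  intro x y
  have := finite_torsion_of_fg Γ
  have := finite_addMonoidHom_of_torsionwiseFinite (torsion Γ) hG
  have := Fintype.ofFinite (torsion Γ →+ G)
  let P : (torsion Γ →+ G) → ι → Prop := fun φ i => φ (a i) = 0
  rw [Tpoly_coe_torsion_eq]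
  calc _ = ∑ φ : torsion Γ →+ G, y ^ (A.filter (P φ)).card := by
        simpa using sum_powerset_natCard_forall_mul_pow P A (y - 1)
    _ = _ := (sum_range_sum_natCard_mul_pow P A y).symm
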